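/- Let M be a matroid in which every circuit C satisfies: for every base B, C = △_{e ∈ C \ B} C_e (symmetric difference of fundamental circuits, in particular well-defined). Then every circuit of M meets every cocircuit of M in an even number of elements. -/

import Mathlib

open Set

namespace Matroid

variable {α : Type*}

/-- A circuit of a matroid is a minimal dependent set. -/
def Circuit (M : Matroid α) (C : Set α) : Prop :=
  M.Dep C ∧ ∀ D, M.Dep D → D ⊆ C → D = C

/-- A cocircuit is a circuit of the dual matroid. -/
def Cocircuit (M : Matroid α) (D : Set α) : Prop := M✶.Circuit D

/-- The matroid obtained by deleting the set `D`. -/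
def delete' (M : Matroid α) (D : Set α) : Matroid α := M ↾ (M.E \ D)

/-- The matroid obtained by contracting the set `C`. -/
def contract' (M : Matroid α) (C : Set α) : Matroid α := ((M✶).delete' C)✶

/-- `N` is a minor of `M` if it is obtained from `M` by contracting a set `C`
and deleting a set `D`, where `C` and `D` are disjoint subsets of the ground set. -/
def IsMinor' (N M : Matroid α) : Prop :=
  ∃ C D, Disjoint C D ∧ C ∪ D ⊆ M.E ∧ N = (M.contract' C).delete' D

/-- A scrawl is a union of circuits. -/
def Scrawl (M : Matroid α) (W : Set α) : Prop :=
  ∃ S : Set (Set α), (∀ C ∈ S, M.Circuit C) ∧ W = ⋃₀ S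

/-- A matroid is tame if every circuit-cocircuit intersection is finite. -/
def Tame (M : Matroid α) : Prop :=
  ∀ C D, M.Circuit C → M.Cocircuit D → (C ∩ D).Finite

/-- A `k`-painting of a matroid: nonzero coefficients on each circuit and each
cocircuit such that each circuit-cocircuit pair is "orthogonal". -/
def IsPainting {k : Type*} [Field k] (M : Matroid α)
    (c : Set α → α → k) (d : Set α → α → k) : Prop :=
  (∀ C, M.Circuit C → ∀ e ∈ C, c C e ≠ 0) ∧
  (∀ D, M.Cocircuit D → ∀ e ∈ D, d D e ≠ 0) ∧
  (∀ C D, M.Circuit C → M.Cocircuit D →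
    (C ∩ D).Finite ∧ ∑ᶠ e ∈ C ∩ D, c C e * d D e = 0)

end Matroid

/-!
Pick `x ∈ C ∩ D`. As `D \ {x}` is coindependent, some base `B` meets `D` exactly in `x`, so `D`
is the fundamental cocircuit of `x` with respect to `B`. By the duality between fundamental
circuits and fundamental cocircuits, for `e ∉ B` the fundamental circuit `C_e` contains `x` iff
`e ∈ D`. So the `e ∈ C \ B` with `x ∈ C_e` are exactly the elements of `(C ∩ D) \ {x}`; as
`x ∈ C`, the hypothesis makes their number finite and odd.
-/

namespace Matroid

variable {α : Type*} {M : Matroid α} {B C D : Set α} {x : α}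

lemma circuit_iff_isCircuit : M.Circuit C ↔ M.IsCircuit C :=
  isCircuit_iff.symm

lemma cocircuit_iff_isCocircuit : M.Cocircuit D ↔ M.IsCocircuit D :=
  circuit_iff_isCircuit

lemma IsCocircuit.exists_isBase_eq_fundCocircuit (hD : M.IsCocircuit D) (hx : x ∈ D) :
    ∃ B, M.IsBase B ∧ x ∈ B ∧ D = M.fundCocircuit x B := by
  obtain ⟨B, hB, hBD⟩ :=
    Coindep.exists_isBase_subset_compl (hD.isCircuit.sdiff_singleton_indep hx)
  have hDB : D ∩ B ⊆ {x} := fun y ⟨hyD, hyB⟩ ↦ by_contra fun hyx ↦ (hBD hyB).2 ⟨hyD, hyx⟩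
  have hxB : x ∈ B := by
    obtain ⟨y, hy⟩ := (isCocircuit_iff_minimal.1 hD).prop B hB
    exact (hDB hy).symm ▸ hy.2
  refine ⟨B, hB, hxB, hD.isCircuit.eq_fundCircuit_of_subset hB.compl_isBase_dual.indep ?_⟩
  intro y hyD
  by_cases hyB : y ∈ B
  · exact .inl (hDB ⟨hyD, hyB⟩)
  · exact .inr ⟨hD.subset_ground hyD, hyB⟩

end Matroid

lemma Set.finite_and_even_ncard_of_odd_ncard_sdiff_singleton {α : Type*} {s : Set α} {a : α}
    (ha : a ∈ s) (hfin : (s \ {a}).Finite) (hodd : Odd (s \ {a}).ncard) :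
    s.Finite ∧ Even s.ncard := by
  have hs : s.Finite := hfin.of_sdiff (finite_singleton a)
  exact ⟨hs, ncard_sdiff_singleton_add_one ha hs ▸ hodd.add_one⟩

open Matroid in
/-- If every circuit is the (well-defined) symmetric difference of the fundamental
circuits of its elements outside any base, then every circuit meets every cocircuit in
an even number of elements. -/
theorem stmt12 {α : Type*} (M : Matroid α)
    (h : ∀ B, M.IsBase B → ∀ C, M.Circuit C → ∀ fc : α → Set α,
      (∀ e ∈ C \ B, M.Circuit (fc e) ∧ e ∈ fc e ∧ fc e ⊆ insert e B) →
      (∀ f, {e | e ∈ C \ B ∧ f ∈ fc e}.Finite) ∧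
      C = {f | Odd {e | e ∈ C \ B ∧ f ∈ fc e}.ncard}) :
    ∀ C D, M.Circuit C → M.Cocircuit D → (C ∩ D).Finite ∧ Even (C ∩ D).ncard := by
  intro C D hC hD
  obtain hCD | ⟨x, hxC, hxD⟩ := (C ∩ D).eq_empty_or_nonempty
  · simp [hCD]
  have hCE : C ⊆ M.E := (circuit_iff_isCircuit.1 hC).subset_ground
  obtain ⟨B, hB, hxB, hDB⟩ := IsCocircuit.exists_isBase_eq_fundCocircuit
    (cocircuit_iff_isCocircuit.1 hD) hxD
  obtain ⟨hfin, hCeq⟩ := h B hB C hC (M.fundCircuit · B) fun e he ↦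
    ⟨circuit_iff_isCircuit.2 (hB.fundCircuit_isCircuit (hCE he.1) he.2),
      M.mem_fundCircuit e B, M.fundCircuit_subset_insert e B⟩
  have hfiber : {e | e ∈ C \ B ∧ x ∈ M.fundCircuit e B} = (C ∩ D) \ {x} := by
    have hDB' : D ∩ B = {x} := hDB ▸ M.fundCocircuit_inter_eq hxB
    ext e
    have hxe := Set.ext_iff.1 hDB' e
    simp only [mem_ofPred_eq, mem_sdiff, mem_inter_iff, mem_singleton_iff] at hxe ⊢
    rw [← hB.mem_fundCocircuit_iff_mem_fundCircuit, ← hDB]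
    tauto
  exact Set.finite_and_even_ncard_of_odd_ncard_sdiff_singleton ⟨hxC, hxD⟩ (hfiber ▸ hfin x)
    (hfiber ▸ hCeq.subset hxC)
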